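/- The BV definition violates Interventionism: in the causal model with binary endogenous variables A, C, D, F, E, equations E = F ∨ (¬A ∧ ¬D), F = D, D = C ∨ A, and a context u in which A=1 and C=1, it holds that C=1 BV-causes E=1 w.r.t. (M,u), yet there is no intervention on a subset of {A, D, F} under which E=1 is counterfactually dependent on C=1. -/

import Mathlib

/-!
Structural equation models (causal models) à la Pearl/Halpern, formalizing
Beckers' "The Counterfactual NESS Definition of Causation".

A causal model over a context type `Ctx` (settings of the exogenous variables),
endogenous variables `V` and values `Val` consists of finite nonempty ranges
`R X`, structural equations `F X`, and a strong-recursiveness (acyclicity)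
witness: an order `ord` such that `F X` only depends on variables of lower order.
-/

structure CausalModel (Ctx V Val : Type) where
  R : V → Finset Val
  R_nonempty : ∀ X, (R X).Nonempty
  F : V → Ctx → (V → Val) → Val
  ord : V → ℕ
  F_resp : ∀ X u s s', (∀ Y, ord Y < ord X → s Y = s' Y) → F X u s = F X u s'

namespace CausalModel

variable {Ctx V Val : Type}

/-- The unique solution of the equations in context `u` (it exists and is
unique by strong recursiveness). `(M,u) ⊨ X = x` iff `M.sol u X = x`. -/
noncomputable def sol (M : CausalModel Ctx V Val) (u : Ctx) : V → Val :=
  fun X =>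
    M.F X u (fun Y => if h : M.ord Y < M.ord X then M.sol u Y else (M.R_nonempty Y).choose)
termination_by X => M.ord X
decreasing_by exact h

/-- `M.sol u` indeed solves all the equations. -/
theorem sol_eq (M : CausalModel Ctx V Val) (u : Ctx) (X : V) :
    M.sol u X = M.F X u (M.sol u) := by
  rw [sol]
  exact M.F_resp X u _ _ (fun Y hY => dif_pos hY)

variable [DecidableEq V]

/-- `X⃗ = x⃗` (given by the set `Xs` and the assignment `xs`) is sufficient for
`E = e` w.r.t. `(M, u)`: the equation for `E` outputs `e` on every setting of the
endogenous variables (in their ranges) that agrees with `xs` on `Xs`. -/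
def Sufficient (M : CausalModel Ctx V Val) (u : Ctx) (Xs : Finset V) (xs : V → Val)
    (E : V) (e : Val) : Prop :=
  ∀ s : V → Val, (∀ Y, s Y ∈ M.R Y) → (∀ X ∈ Xs, s X = xs X) → M.F E u s = e

/-- The intervened model `M_{X⃗ ← x⃗}`: the equations of variables in `Xs` are
replaced by the constants given by `xs`. -/
def intervene (M : CausalModel Ctx V Val) (Xs : Finset V) (xs : V → Val) :
    CausalModel Ctx V Val where
  R := M.R
  R_nonempty := M.R_nonempty
  F := fun X u s => if X ∈ Xs then xs X else M.F X u s
  ord := M.ord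
  F_resp := by
    intro X u s s' h
    by_cases hX : X ∈ Xs
    · simp [hX]
    · simpa [hX] using M.F_resp X u s s' h

/-- `W⃗ = w⃗` (given by `Ws, ws`) is a witness for `C = c` directly NESS-causing
`E = e` w.r.t. `(M, u)`: `C = c` and `W⃗ = w⃗` actually hold, `{C = c} ∪ {W⃗ = w⃗}`
is sufficient for `E = e`, and `W⃗ = w⃗` alone is not. -/
def DirectNESSWith (M : CausalModel Ctx V Val) (u : Ctx) (C : V) (c : Val) (E : V) (e : Val)
    (Ws : Finset V) (ws : V → Val) : Prop :=
  M.sol u C = c ∧ (∀ W ∈ Ws, M.sol u W = ws W) ∧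
  M.Sufficient u (insert C Ws) (Function.update ws C c) E e ∧
  ¬ M.Sufficient u Ws ws E e

/-- `C = c` directly NESS-causes `E = e` w.r.t. `(M, u)`. -/
def DirectNESS (M : CausalModel Ctx V Val) (u : Ctx) (C : V) (c : Val) (E : V) (e : Val) :
    Prop :=
  ∃ (Ws : Finset V) (ws : V → Val), M.DirectNESSWith u C c E e Ws ws

/-- `C = c` NESS-causes `E = e` along the path `p = (C₁, …, Cₙ)` w.r.t. `(M, u)`:
there are values `c₁, …, cₙ` such that `C = c` directly NESS-causes `C₁ = c₁`, …,
and `Cₙ = cₙ` directly NESS-causes `E = e`. (A direct NESS-cause is a NESS-cause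
along the empty path.) -/
def NESSAlong (M : CausalModel Ctx V Val) (u : Ctx) (C : V) (c : Val) (p : List V)
    (E : V) (e : Val) : Prop :=
  ∃ cs : List Val, cs.length = p.length ∧
    List.Chain (fun a b => M.DirectNESS u a.1 a.2 b.1 b.2) (C, c) (p.zip cs ++ [(E, e)])

/-- `C = c` NESS-causes `E = e` w.r.t. `(M, u)`: there is a chain of direct
NESS-causes from `C = c` to `E = e`. -/
def NESS (M : CausalModel Ctx V Val) (u : Ctx) (C : V) (c : Val) (E : V) (e : Val) : Prop :=
  ∃ p : List V, M.NESSAlong u C c p E e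

/-- The BV definition: `C = c` NESS-causes `E = e` w.r.t. `(M, u)` and there is a
`c' ∈ R(C)` such that `C = c'` does not NESS-cause `E = e` w.r.t. `(M_{C ← c'}, u)`. -/
def BVCause (M : CausalModel Ctx V Val) (u : Ctx) (C : V) (c : Val) (E : V) (e : Val) :
    Prop :=
  M.NESS u C c E e ∧
    ∃ c' ∈ M.R C, ¬ (M.intervene {C} (fun _ => c')).NESS u C c' E e

/-- The CNESS definition: `C = c` NESS-causes `E = e` along some path `p` w.r.t.
`(M, u)` and there is a `c' ∈ R(C)` such that `C = c'` does not NESS-cause `E = e`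
along any subpath of `p` (a path all of whose variables are in `p`) w.r.t.
`(M_{C ← c'}, u)`. -/
def CNESSCause (M : CausalModel Ctx V Val) (u : Ctx) (C : V) (c : Val) (E : V) (e : Val) :
    Prop :=
  ∃ p : List V, M.NESSAlong u C c p E e ∧
    ∃ c' ∈ M.R C, ∀ p' : List V, (∀ X ∈ p', X ∈ p) →
      ¬ (M.intervene {C} (fun _ => c')).NESSAlong u C c' p' E e

/-- `E = e` is counterfactually dependent on `C = c` w.r.t. `(M, u)`:
`(M,u) ⊨ C = c ∧ E = e` and there is a `c' ∈ R(C)` with `(M,u) ⊨ [C ← c'] ¬(E = e)`. -/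
def CfDep (M : CausalModel Ctx V Val) (u : Ctx) (C : V) (c : Val) (E : V) (e : Val) : Prop :=
  M.sol u C = c ∧ M.sol u E = e ∧
    ∃ c' ∈ M.R C, (M.intervene {C} (fun _ => c')).sol u E ≠ e

/-- `E = e` is counterfactually dependent on `C = c` given the intervention
`X⃗ ← x⃗`: in `M_{X⃗ ← x⃗}` with context `u`, `C = c` and `E = e` hold, and there is
a `c' ∈ R(C)` such that additionally intervening with `C ← c'` makes `E = e` false. -/
def CfDepGiven (M : CausalModel Ctx V Val) (u : Ctx) (Xs : Finset V) (xs : V → Val)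
    (C : V) (c : Val) (E : V) (e : Val) : Prop :=
  (M.intervene Xs xs).sol u C = c ∧ (M.intervene Xs xs).sol u E = e ∧
    ∃ c' ∈ M.R C, ((M.intervene Xs xs).intervene {C} (fun _ => c')).sol u E ≠ e

/-- `Y` is a parent of `X`: the equation `F X` varies with the value of `Y`
for some context and some setting (within the ranges) of the other variables. -/
def Parent (M : CausalModel Ctx V Val) (Y X : V) : Prop :=
  ∃ (u : Ctx) (s : V → Val) (y y' : Val),
    (∀ Z, s Z ∈ M.R Z) ∧ y ∈ M.R Y ∧ y' ∈ M.R Y ∧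
    M.F X u (Function.update s Y y) ≠ M.F X u (Function.update s Y y')

end CausalModel
/-- Variables for the model with equations `E = F ∨ (¬A ∧ ¬D)`, `F = D`, `D = C ∨ A`. -/
inductive V5 | A | C | D | F | E
deriving DecidableEq

/-- The model with equations `E = F ∨ (¬A ∧ ¬D)`, `F = D`, `D = C ∨ A`,
in a context where `A = 1` and `C = 1`. -/
def M5 : CausalModel Unit V5 Bool where
  R := fun _ => Finset.univ
  R_nonempty := fun _ => Finset.univ_nonempty
  F := fun X _ s =>
    match X with
    | .A => true
    | .C => true
    | .D => s .C || s .A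
    | .F => s .D
    | .E => s .F || (!(s .A) && !(s .D))
  ord := fun X => match X with | .A => 0 | .C => 0 | .D => 1 | .F => 2 | .E => 3
  F_resp := by
    intro X u s s' h
    cases X
    · rfl
    · rfl
    · show (s V5.C || s V5.A) = (s' V5.C || s' V5.A)
      rw [h V5.C (by decide), h V5.A (by decide)]
    · show s V5.D = s' V5.D
      exact h V5.D (by decide)
    · show (s V5.F || (!(s V5.A) && !(s V5.D))) = (s' V5.F || (!(s' V5.A) && !(s' V5.D)))
      rw [h V5.A (by decide), h V5.D (by decide), h V5.F (by decide)]

/-!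
`C = 1` NESS-causes `E = 1` along `C → D → F → E`, each link being direct with an empty
witness: `C = 1` alone forces `D = 1`, `D = 1` forces `F = 1` and `F = 1` forces `E = 1`.
After `C ← 0`, however, `C` is a parent of `D` alone, and `D = C ∨ A` with `A = 1` forces
any witness for `D` to contain `A = 1`, which is sufficient by itself; so `C = 0` directly
NESS-causes nothing.

For interventionism: if `E = 1` comes from `¬A ∧ ¬D`, then `D` is held at `0` (free, it
would equal `C ∨ A = 1`) and switching `C` off changes neither `A` nor `D`. Otherwise `F = 1`,
and switching `C` off lowers `F` only if `F` follows `D`, `D` is free and `A = 0`; but then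
`¬A ∧ ¬D` holds and `E` stays `1`.
-/

namespace CausalModel

variable {Ctx V Val : Type}

theorem sol_unique (M : CausalModel Ctx V Val) (u : Ctx) (t : V → Val)
    (ht : ∀ X, t X = M.F X u t) : M.sol u = t := by
  suffices h : ∀ n X, M.ord X < n → M.sol u X = t X from
    funext fun X => h _ X (Nat.lt_succ_self _)
  intro n
  induction n with
  | zero => intro X h; omega
  | succ n ih =>
    intro X h
    rw [M.sol_eq, ht X]
    exact M.F_resp X u _ _ fun Y hY => ih Y (by omega)

variable [DecidableEq V]

theorem intervene_intervene (M : CausalModel Ctx V Val) (Xs Ys : Finset V) (xs ys : V → Val) :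
    (M.intervene Xs xs).intervene Ys ys
      = M.intervene (Ys ∪ Xs) (fun X => if X ∈ Ys then ys X else xs X) := by
  simp only [intervene, mk.injEq, true_and, and_true]
  funext X u s
  by_cases hY : X ∈ Ys <;> by_cases hX : X ∈ Xs <;> simp [hY, hX]

theorem parent_intervene_iff (M : CausalModel Ctx V Val) (Xs : Finset V) (xs : V → Val)
    (Y X : V) : (M.intervene Xs xs).Parent Y X ↔ X ∉ Xs ∧ M.Parent Y X := by
  by_cases hX : X ∈ Xs <;> simp [Parent, intervene, hX]

theorem directNESS_of_sufficient_singleton {M : CausalModel Ctx V Val} {u : Ctx} {C E : V}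
    {c e : Val} (hC : M.sol u C = c) (hsuff : M.Sufficient u {C} (fun _ => c) E e)
    (hvar : ∃ s, (∀ Y, s Y ∈ M.R Y) ∧ M.F E u s ≠ e) : M.DirectNESS u C c E e := by
  refine ⟨∅, fun _ => c, hC, by simp, by simpa using hsuff, ?_⟩
  obtain ⟨s, hs, hne⟩ := hvar
  exact fun h => hne (h s hs (by simp))

/-- Only the equation of `E` enters sufficiency, so a non-parent `C` can be dropped from
any witness. -/
theorem not_directNESS_of_not_parent {M : CausalModel Ctx V Val} {u : Ctx} {C E : V}
    {c e : Val} (hc : c ∈ M.R C) (hCE : ¬ M.Parent C E) : ¬ M.DirectNESS u C c E e := by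
  rintro ⟨Ws, ws, -, -, hsuff, hnot⟩
  refine hnot fun s hs hWs => ?_
  have hupd : M.F E u (Function.update s C c) = M.F E u s := by
    by_contra hne
    exact hCE ⟨u, s, c, s C, hs, hc, hs C, by rwa [Function.update_eq_self]⟩
  rw [← hupd]
  refine hsuff _ (fun Y => ?_) fun X hX => ?_
  · by_cases hY : Y = C
    · subst hY; simpa using hc
    · simpa [hY] using hs Y
  · by_cases hXC : X = C
    · subst hXC; simp
    · simp [hXC, hWs X ((Finset.mem_insert.mp hX).resolve_left hXC)]

theorem not_NESS_of_forall_not_directNESS {M : CausalModel Ctx V Val} {u : Ctx} {C E : V}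
    {c e : Val} (h : ∀ X x, ¬ M.DirectNESS u C c X x) : ¬ M.NESS u C c E e := by
  rintro ⟨p, cs, -, hchain⟩
  obtain ⟨b, l, hbl⟩ := List.exists_cons_of_ne_nil
    (List.append_ne_nil_of_right_ne_nil (p.zip cs) (List.cons_ne_nil (E, e) []))
  rw [hbl] at hchain
  exact h b.1 b.2 (List.isChain_cons_cons.mp hchain).1

end CausalModel

open CausalModel

theorem M5_sol : M5.sol () = fun _ => true :=
  M5.sol_unique () _ fun X => by cases X <;> rfl

theorem M5_parent_C {X : V5} (h : M5.Parent V5.C X) : X = V5.D := by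
  obtain ⟨_, s, y, y', -, -, -, hne⟩ := h
  cases X <;> simp_all [M5]

def solIntervenedM5 (Xs : Finset V5) (xs : V5 → Bool) : V5 → Bool := fun X =>
  let a := if V5.A ∈ Xs then xs .A else true
  let c := if V5.C ∈ Xs then xs .C else true
  let d := if V5.D ∈ Xs then xs .D else c || a
  let f := if V5.F ∈ Xs then xs .F else d
  match X with
  | .A => a
  | .C => c
  | .D => d
  | .F => f
  | .E => if V5.E ∈ Xs then xs .E else f || (!a && !d)

theorem M5_intervene_sol (Xs : Finset V5) (xs : V5 → Bool) :
    (M5.intervene Xs xs).sol () = solIntervenedM5 Xs xs :=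
  sol_unique _ () _ fun X => by cases X <;> rfl

theorem M5_NESS_C_E : M5.NESS () V5.C true V5.E true := by
  have hC : ∀ X, M5.sol () X = true := fun X => congrFun M5_sol X
  have hR : ∀ (s : V5 → Bool) Y, s Y ∈ M5.R Y := fun _ _ => Finset.mem_univ _
  have hCD : M5.DirectNESS () V5.C true V5.D true :=
    directNESS_of_sufficient_singleton (hC _)
      (fun s _ hs => by simp [M5, hs V5.C (Finset.mem_singleton_self _)])
      ⟨fun _ => false, hR _, by decide⟩
  have hDF : M5.DirectNESS () V5.D true V5.F true :=
    directNESS_of_sufficient_singleton (hC _)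
      (fun s _ hs => by simp [M5, hs V5.D (Finset.mem_singleton_self _)])
      ⟨fun _ => false, hR _, by decide⟩
  have hFE : M5.DirectNESS () V5.F true V5.E true :=
    directNESS_of_sufficient_singleton (hC _)
      (fun s _ hs => by simp [M5, hs V5.F (Finset.mem_singleton_self _)])
      ⟨fun Y => decide (Y ≠ V5.F), hR _, by decide⟩
  exact ⟨[V5.D, V5.F], [true, true], rfl,
    .cons_cons hCD (.cons_cons hDF (.cons_cons hFE (.singleton _)))⟩

theorem not_directNESS_C_false_D (x : Bool) :
    ¬ (M5.intervene {V5.C} fun _ => false).DirectNESS () V5.C false V5.D x := by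
  rintro ⟨Ws, ws, -, hWs, hsuff, hnot⟩
  have hR : ∀ (s : V5 → Bool) Y, s Y ∈ (M5.intervene {V5.C} fun _ => false).R Y :=
    fun _ _ => Finset.mem_univ _
  have hF : ∀ s, (M5.intervene {V5.C} fun _ => false).F V5.D () s = (s V5.C || s V5.A) :=
    fun _ => rfl
  by_cases hA : V5.A ∈ Ws
  · have hwsA : ws V5.A = true := by
      rw [← hWs V5.A hA, M5_intervene_sol]; decide
    have hx : x = true := by
      rw [← hsuff _ (hR _) fun _ _ => rfl, hF]; simp [hwsA]
    exact hnot fun s _ hs => by rw [hF, hs V5.A hA, hwsA, hx, Bool.or_true]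
  · -- without `A = 1` in the witness, `D = C ∨ A` with `C = 0` still varies with `A`
    have hagree : ∀ b, ∀ Y ∈ insert V5.C Ws,
        Function.update (Function.update ws V5.C false) V5.A b Y
          = Function.update ws V5.C false Y := by
      intro b Y hY
      have hYA : Y ≠ V5.A := by rintro rfl; simp_all
      simp [hYA]
    have h1 := hsuff _ (hR _) (hagree true)
    have h0 := hsuff _ (hR _) (hagree false)
    simp only [hF, Function.update_self, Function.update_of_ne (by decide : V5.C ≠ V5.A),
      Bool.false_or] at h1 h0
    exact absurd (h1.trans h0.symm) (by decide)

theorem not_directNESS_C_false (X : V5) (x : Bool) :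
    ¬ (M5.intervene {V5.C} fun _ => false).DirectNESS () V5.C false X x := by
  by_cases hX : X = V5.D
  · subst hX; exact not_directNESS_C_false_D x
  · exact not_directNESS_of_not_parent (Finset.mem_univ _)
      fun h => hX (M5_parent_C ((parent_intervene_iff _ _ _ _ _).mp h).2)

theorem M5_bvCause : M5.BVCause () V5.C true V5.E true :=
  ⟨M5_NESS_C_E, false, Finset.mem_univ _,
    not_NESS_of_forall_not_directNESS not_directNESS_C_false⟩

theorem M5_not_cfDepGiven (Xs : Finset V5) (xs : V5 → Bool) (hXs : Xs ⊆ {V5.A, V5.D, V5.F}) :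
    ¬ M5.CfDepGiven () Xs xs V5.C true V5.E true := by
  rintro ⟨-, hE, c', -, hE'⟩
  have hCX : V5.C ∉ Xs := fun h => by simpa using hXs h
  have hEX : V5.E ∉ Xs := fun h => by simpa using hXs h
  rw [M5_intervene_sol] at hE
  rw [intervene_intervene, M5_intervene_sol] at hE'
  simp only [solIntervenedM5, Finset.mem_union, Finset.mem_singleton] at hE hE'
  grind

/-- The BV definition violates Interventionism: in the model with
equations `E = F ∨ (¬A ∧ ¬D)`, `F = D`, `D = C ∨ A` and a context with `A = 1` and
`C = 1`, `C = 1` BV-causes `E = 1`, yet there is no intervention on a subset of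
`{A, D, F}` under which `E = 1` is counterfactually dependent on `C = 1`. -/
theorem bv_violates_interventionism :
    M5.BVCause () V5.C true V5.E true ∧
      ∀ (Xs : Finset V5) (xs : V5 → Bool), Xs ⊆ {V5.A, V5.D, V5.F} →
        ¬ M5.CfDepGiven () Xs xs V5.C true V5.E true :=
  ⟨M5_bvCause, M5_not_cfDepGiven⟩
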